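/- arXiv:1201.6461 — 3 statements merged into one kernel-verified Lean document; each statement's English description precedes it below -/
import Mathlib

section
/- Let q, q' : ℕ×ℕ → ℝ both be solutions of the Dirichlet problem that are symmetric, i.e., q(i,j) = q(j,i) and q'(i,j) = q'(j,i) for all i,j ∈ ℕ. If q(i,1) = q'(i,1) for all i ≥ 1, then q(i,j) = q'(i,j) for all i,j ∈ ℕ; i.e., a symmetric solution of the Dirichlet problem is completely determined by its values on the row j = 1. -/
/-!
The coefficient `r / (2 (r + d))` of `q (i + 1, j)` in the recurrence at `(i, j)` is nonzero,
so the recurrence can be solved for `q (i + 1, j)`: column `i + 1` is determined by columns `i`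
and `i - 1`. Column `0` is fixed by the boundary condition and, by symmetry, column `1` is the
row `j = 1`; induction over the columns then determines the whole solution.
-/

theorem forall_of_columns_zero_one {P : ℕ → ℕ → Prop}
    (h_zero : ∀ j, P 0 j) (h_one : ∀ j, P 1 j) (h_bot : ∀ i, P (i + 2) 0)
    (h_step : ∀ a b, P a (b + 1) → P (a + 1) b → P (a + 1) (b + 1) → P (a + 1) (b + 2) →
      P (a + 2) (b + 1)) :
    ∀ i j, P i j := by
  intro i
  induction i using Nat.twoStepInduction with
  | zero => exact h_zero
  | one => exact h_one
  | more a ih ih_succ =>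
    rintro (_ | b)
    · exact h_bot a
    · exact h_step a b (ih _) (ih_succ _) (ih_succ _) (ih_succ _)

/-- a symmetric solution of the Dirichlet problem is completely determined
by its values on the row `j = 1`. -/
theorem dirichlet_determined_by_first_row (r d : ℝ) (hr : 0 < r) (hd : 0 < d)
    (q q' : ℕ × ℕ → ℝ)
    (hq_bdry1 : ∀ i : ℕ, q (i, 0) = 1) (hq_bdry2 : ∀ j : ℕ, q (0, j) = 1)
    (hq_rec : ∀ i j : ℕ, 1 ≤ i → 1 ≤ j →
      q (i, j)
        = d * i / ((r + d) * ((i : ℝ) + (j : ℝ))) * q (i - 1, j)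
          + d * j / ((r + d) * ((i : ℝ) + (j : ℝ))) * q (i, j - 1)
          + r / (2 * (r + d)) * q (i, j + 1)
          + r / (2 * (r + d)) * q (i + 1, j))
    (hq_sym : ∀ i j : ℕ, q (i, j) = q (j, i))
    (hq'_bdry1 : ∀ i : ℕ, q' (i, 0) = 1) (hq'_bdry2 : ∀ j : ℕ, q' (0, j) = 1)
    (hq'_rec : ∀ i j : ℕ, 1 ≤ i → 1 ≤ j →
      q' (i, j)
        = d * i / ((r + d) * ((i : ℝ) + (j : ℝ))) * q' (i - 1, j)
          + d * j / ((r + d) * ((i : ℝ) + (j : ℝ))) * q' (i, j - 1)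
          + r / (2 * (r + d)) * q' (i, j + 1)
          + r / (2 * (r + d)) * q' (i + 1, j))
    (hq'_sym : ∀ i j : ℕ, q' (i, j) = q' (j, i))
    (hrow : ∀ i : ℕ, 1 ≤ i → q (i, 1) = q' (i, 1)) :
    ∀ i j : ℕ, q (i, j) = q' (i, j) := by
  have hc : r / (2 * (r + d)) ≠ 0 := by positivity
  refine forall_of_columns_zero_one (P := fun i j ↦ q (i, j) = q' (i, j)) ?_ ?_ ?_ ?_
  · intro j
    rw [hq_bdry2, hq'_bdry2]
  · rintro (_ | j)
    · rw [hq_bdry1, hq'_bdry1]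
    · rw [hq_sym, hq'_sym]
      exact hrow _ j.succ_pos
  · intro i
    rw [hq_bdry1, hq'_bdry1]
  · intro a b h_left h_down h_mid h_up
    have e := hq_rec (a + 1) (b + 1) a.succ_pos b.succ_pos
    have e' := hq'_rec (a + 1) (b + 1) a.succ_pos b.succ_pos
    simp only [Nat.add_sub_cancel] at e e'
    rw [h_left, h_down, h_mid, h_up] at e
    exact mul_left_cancel₀ hc (by linarith)
end

section
/- If r ≤ d, then extinction is almost sure from every initial state: p_{i,j} = 1 for all i,j ∈ ℕ. -/
/-- `hitProbAux r d T (i, j) = ℙ_{i,j}[τ₀ ≤ T]`: the probability, for the discrete-time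
Markov chain on `ℕ × ℕ` (jumping from a non-absorbed state `(i,j)` to `(i+1,j)` and `(i,j+1)`
with probability `r/(2(r+d))` each, and to `(i-1,j)`, `(i,j-1)` with probabilities
`d·i/((r+d)(i+j))` and `d·j/((r+d)(i+j))`, states with a zero coordinate being absorbing),
started at `(i,j)`, that one of the axes is reached within `T` steps. -/
noncomputable def hitProbAux (r d : ℝ) : ℕ → ℕ × ℕ → ℝ
  | 0, p => if p.1 = 0 ∨ p.2 = 0 then 1 else 0
  | T + 1, p =>
      if p.1 = 0 ∨ p.2 = 0 then 1
      else
        r / (2 * (r + d)) * hitProbAux r d T (p.1 + 1, p.2)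
          + r / (2 * (r + d)) * hitProbAux r d T (p.1, p.2 + 1)
          + d * p.1 / ((r + d) * ((p.1 : ℝ) + (p.2 : ℝ))) * hitProbAux r d T (p.1 - 1, p.2)
          + d * p.2 / ((r + d) * ((p.1 : ℝ) + (p.2 : ℝ))) * hitProbAux r d T (p.1, p.2 - 1)

/-- `extinctionProb r d i j = p_{i,j} = ℙ_{i,j}[τ₀ < ∞]`, where
`τ₀ = inf {t : X_t = 0 or Y_t = 0}`: it is the supremum (monotone limit) over the time
horizon `T` of `ℙ_{i,j}[τ₀ ≤ T] = hitProbAux r d T (i, j)`. -/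
noncomputable def extinctionProb (r d : ℝ) (i j : ℕ) : ℝ :=
  ⨆ T : ℕ, hitProbAux r d T (i, j)

/-!
The total population `X + Y` of the chain moves up with probability `r / (r + d) ≤ 1/2` and
down otherwise, whatever the composition of the population, and once it equals `1` one of the
coordinates is `0`. Hence the extinction probability from `(i, j)` dominates the ruin probability
of a walk on `ℕ` with up-probability `p ≤ 1/2` started at `i + j - 1`. The latter is `1`: its
limit `S` is antitone, bounded and satisfies `S (n + 1) = p S (n + 2) + (1 - p) S n`, so the
decrements `S n - S (n + 1)` grow by the factor `(1 - p) / p ≥ 1` while summing to at most a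
bounded amount, which forces them to vanish.
-/

open Filter Topology

lemma nonpos_of_forall_nat_mul_le {x C : ℝ} (h : ∀ k : ℕ, k * x ≤ C) : x ≤ 0 := by
  by_contra! hx
  obtain ⟨k, hk⟩ := ((tendsto_natCast_atTop_atTop.atTop_mul_const hx).eventually_gt_atTop C).exists
  exact (h k).not_gt hk

lemma Antitone.eq_of_harmonic {p : ℝ} (hp : 0 < p) (hp2 : p ≤ 1 / 2) {S : ℕ → ℝ}
    (hS : Antitone S) (hbdd : BddBelow (Set.range S))
    (harm : ∀ n, S (n + 1) = p * S (n + 2) + (1 - p) * S n) (n : ℕ) : S n = S 0 := by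
  obtain ⟨b, hb⟩ := hbdd
  set D : ℕ → ℝ := fun n => S n - S (n + 1) with hD
  have hD_nonneg (n : ℕ) : 0 ≤ D n := sub_nonneg.2 (hS n.le_succ)
  have hD_mono : Monotone D := monotone_nat_of_le_succ fun n => by
    have hrec : p * D (n + 1) = (1 - p) * D n := by simp only [hD]; linear_combination harm n
    refine le_of_mul_le_mul_left ?_ hp
    rw [hrec]
    exact mul_le_mul_of_nonneg_right (by linarith) (hD_nonneg n)
  have hD_zero (n : ℕ) : D n = 0 := by
    have hsum (k : ℕ) : k * D n ≤ S n - S (n + k) := by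
      induction k with
      | zero => simp
      | succ k ih =>
        have := hD_mono (Nat.le_add_right n k)
        simp only [hD, ← add_assoc] at this ⊢
        push_cast
        linarith
    refine le_antisymm (nonpos_of_forall_nat_mul_le (C := S n - b) fun k => ?_) (hD_nonneg n)
    linarith [hsum k, hb (Set.mem_range_self (n + k))]
  induction n with
  | zero => rfl
  | succ n ih => linarith [hD_zero n]

/-- `ruinProb p T n` is the probability that the walk on `ℕ` stepping up with probability `p`
and down with probability `1 - p`, started at `n`, reaches `0` within `T` steps. -/
noncomputable def ruinProb (p : ℝ) : ℕ → ℕ → ℝ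
  | _, 0 => 1
  | 0, _ + 1 => 0
  | T + 1, n + 1 => p * ruinProb p T (n + 2) + (1 - p) * ruinProb p T n

section ruinProb

variable {p : ℝ} (h0 : 0 ≤ p) (h1 : p ≤ 1)
include h0 h1

lemma ruinProb_nonneg (T n : ℕ) : 0 ≤ ruinProb p T n := by
  induction T generalizing n with
  | zero => cases n <;> simp [ruinProb]
  | succ T ih =>
    cases n with
    | zero => simp [ruinProb]
    | succ n => exact add_nonneg (mul_nonneg h0 (ih _)) (mul_nonneg (by linarith) (ih _))

lemma ruinProb_le_one (T n : ℕ) : ruinProb p T n ≤ 1 := by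
  induction T generalizing n with
  | zero => cases n <;> simp [ruinProb]
  | succ T ih =>
    cases n with
    | zero => simp [ruinProb]
    | succ n =>
      calc ruinProb p (T + 1) (n + 1)
          = p * ruinProb p T (n + 2) + (1 - p) * ruinProb p T n := rfl
        _ ≤ p * 1 + (1 - p) * 1 := by gcongr <;> apply ih
        _ = 1 := by ring

lemma ruinProb_le_succ (T n : ℕ) : ruinProb p T n ≤ ruinProb p (T + 1) n := by
  induction T generalizing n with
  | zero =>
    cases n with
    | zero => simp [ruinProb]
    | succ n => exact ruinProb_nonneg h0 h1 1 (n + 1)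
  | succ T ih =>
    cases n with
    | zero => simp [ruinProb]
    | succ n =>
      show p * ruinProb p T (n + 2) + (1 - p) * ruinProb p T n
        ≤ p * ruinProb p (T + 1) (n + 2) + (1 - p) * ruinProb p (T + 1) n
      gcongr <;> apply ih

lemma ruinProb_succ_le (T n : ℕ) : ruinProb p T (n + 1) ≤ ruinProb p T n := by
  induction T generalizing n with
  | zero => cases n <;> simp [ruinProb]
  | succ T ih =>
    cases n with
    | zero => exact ruinProb_le_one h0 h1 _ _
    | succ n =>
      show p * ruinProb p T (n + 3) + (1 - p) * ruinProb p T (n + 1)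
        ≤ p * ruinProb p T (n + 2) + (1 - p) * ruinProb p T n
      gcongr <;> apply ih

end ruinProb

theorem iSup_ruinProb_eq_one {p : ℝ} (hp : 0 < p) (hp2 : p ≤ 1 / 2) (n : ℕ) :
    ⨆ T, ruinProb p T n = 1 := by
  have h0 : 0 ≤ p := hp.le
  have h1 : p ≤ 1 := by linarith
  set S : ℕ → ℝ := fun n => ⨆ T, ruinProb p T n with hS
  have hbdd (n : ℕ) : BddAbove (Set.range fun T => ruinProb p T n) :=
    ⟨1, Set.forall_mem_range.2 fun T => ruinProb_le_one h0 h1 T n⟩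
  have htend (n : ℕ) : Tendsto (fun T => ruinProb p T n) atTop (𝓝 (S n)) :=
    tendsto_atTop_ciSup (monotone_nat_of_le_succ fun T => ruinProb_le_succ h0 h1 T n) (hbdd n)
  have harm (n : ℕ) : S (n + 1) = p * S (n + 2) + (1 - p) * S n :=
    tendsto_nhds_unique ((htend (n + 1)).comp (tendsto_add_atTop_nat 1))
      (((htend (n + 2)).const_mul p).add ((htend n).const_mul (1 - p)))
  have hS_anti : Antitone S := antitone_nat_of_succ_le fun n =>
    ciSup_mono (hbdd n) fun T => ruinProb_succ_le h0 h1 T n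
  have hS_bdd : BddBelow (Set.range S) :=
    ⟨0, Set.forall_mem_range.2 fun n => le_ciSup_of_le (hbdd n) 0 (ruinProb_nonneg h0 h1 0 n)⟩
  have hS_zero : S 0 = 1 := by simp [hS, ruinProb]
  show S n = 1
  rw [hS_anti.eq_of_harmonic hp hp2 hS_bdd harm n, hS_zero]

section hitProbAux

variable {r d : ℝ}

lemma hitProbAux_of_eq_zero_or (T : ℕ) {i j : ℕ} (h : i = 0 ∨ j = 0) :
    hitProbAux r d T (i, j) = 1 := by
  cases T <;> simp [hitProbAux, h]

lemma hitProbAux_zero_succ_succ (i j : ℕ) : hitProbAux r d 0 (i + 1, j + 1) = 0 := by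
  simp [hitProbAux]

lemma hitProbAux_succ_succ_succ (T i j : ℕ) :
    hitProbAux r d (T + 1) (i + 1, j + 1) =
      r / (2 * (r + d)) * hitProbAux r d T (i + 2, j + 1)
        + r / (2 * (r + d)) * hitProbAux r d T (i + 1, j + 2)
        + d * (i + 1) / ((r + d) * (i + j + 2)) * hitProbAux r d T (i, j + 1)
        + d * (j + 1) / ((r + d) * (i + j + 2)) * hitProbAux r d T (i + 1, j) := by
  simp only [hitProbAux, Nat.add_eq_zero_iff, one_ne_zero, and_false, or_self, ↓reduceIte,
    Nat.cast_add, Nat.cast_one, add_tsub_cancel_right]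
  ring_nf

lemma up_rates_add : r / (2 * (r + d)) + r / (2 * (r + d)) = r / (r + d) := by
  rw [mul_comm, ← div_div, add_halves]

lemma down_rates_add (hrd : r + d ≠ 0) (i j : ℕ) :
    d * (i + 1) / ((r + d) * (i + j + 2)) + d * (j + 1) / ((r + d) * (i + j + 2))
      = 1 - r / (r + d) := by
  field_simp
  ring

variable (hr : 0 ≤ r) (hd : 0 < d)
include hr hd

lemma hitProbAux_le_one (T : ℕ) (x : ℕ × ℕ) : hitProbAux r d T x ≤ 1 := by
  have hrd : r + d ≠ 0 := by positivity
  induction T generalizing x with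
  | zero =>
    rcases x with ⟨_ | i, _ | j⟩ <;> simp [hitProbAux]
  | succ T ih =>
    rcases x with ⟨_ | i, _ | j⟩
    iterate 3 simp [hitProbAux_of_eq_zero_or]
    rw [hitProbAux_succ_succ_succ]
    calc _ ≤ r / (2 * (r + d)) * 1 + r / (2 * (r + d)) * 1
          + d * (i + 1) / ((r + d) * (i + j + 2)) * 1
          + d * (j + 1) / ((r + d) * (i + j + 2)) * 1 := by gcongr <;> apply ih
      _ = 1 := by linear_combination up_rates_add (r := r) (d := d) + down_rates_add hrd i j

lemma ruinProb_le_hitProbAux (T i j : ℕ) :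
    ruinProb (r / (r + d)) T (i + j - 1) ≤ hitProbAux r d T (i, j) := by
  have hrd : r + d ≠ 0 := by positivity
  have hp0 : 0 ≤ r / (r + d) := by positivity
  have hp1 : r / (r + d) ≤ 1 := div_le_one_of_le₀ (by linarith) (by positivity)
  induction T generalizing i j with
  | zero =>
    rcases i with _ | i <;> rcases j with _ | j
    iterate 3 simp [hitProbAux_of_eq_zero_or, ruinProb_le_one hp0 hp1]
    rw [hitProbAux_zero_succ_succ, show i + 1 + (j + 1) - 1 = i + j + 1 by omega]
    exact le_rfl
  | succ T ih =>
    rcases i with _ | i <;> rcases j with _ | j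
    iterate 3 simp [hitProbAux_of_eq_zero_or, ruinProb_le_one hp0 hp1]
    rw [hitProbAux_succ_succ_succ, show i + 1 + (j + 1) - 1 = i + j + 1 by omega]
    calc ruinProb (r / (r + d)) (T + 1) (i + j + 1)
        = r / (r + d) * ruinProb (r / (r + d)) T (i + j + 2)
          + (1 - r / (r + d)) * ruinProb (r / (r + d)) T (i + j) := rfl
      _ = r / (2 * (r + d)) * ruinProb (r / (r + d)) T (i + j + 2)
          + r / (2 * (r + d)) * ruinProb (r / (r + d)) T (i + j + 2)
          + d * (i + 1) / ((r + d) * (i + j + 2)) * ruinProb (r / (r + d)) T (i + j)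
          + d * (j + 1) / ((r + d) * (i + j + 2)) * ruinProb (r / (r + d)) T (i + j) := by
        linear_combination
          (-ruinProb (r / (r + d)) T (i + j + 2)) * up_rates_add (r := r) (d := d)
            - ruinProb (r / (r + d)) T (i + j) * down_rates_add hrd i j
      _ ≤ _ := by gcongr <;> refine Eq.trans_le ?_ (ih _ _) <;> congr 1 <;> omega

end hitProbAux

theorem extinctionProb_eq_one_of_le_general (r d : ℝ) (hr : 0 < r) (hrd : r ≤ d) :
    ∀ i j : ℕ, extinctionProb r d i j = 1 := by
  intro i j
  have hd : 0 < d := hr.trans_le hrd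
  have hbdd : BddAbove (Set.range fun T => hitProbAux r d T (i, j)) :=
    ⟨1, Set.forall_mem_range.2 fun T => hitProbAux_le_one hr.le hd T (i, j)⟩
  have hp2 : r / (r + d) ≤ 1 / 2 := by
    rw [div_le_div_iff₀ (by positivity) two_pos]
    linarith
  refine le_antisymm (ciSup_le fun T => hitProbAux_le_one hr.le hd T (i, j)) ?_
  calc (1 : ℝ) = ⨆ T, ruinProb (r / (r + d)) T (i + j - 1) :=
        (iSup_ruinProb_eq_one (by positivity) hp2 _).symm
    _ ≤ extinctionProb r d i j :=
        ciSup_mono hbdd fun T => ruinProb_le_hitProbAux hr.le hd T i j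

/-- if `r ≤ d`, extinction is almost sure from every initial state. -/
theorem extinctionProb_eq_one_of_le (r d : ℝ) (hr : 0 < r) (hd : 0 < d) (hrd : r ≤ d) :
    ∀ i j : ℕ, extinctionProb r d i j = 1 :=
  extinctionProb_eq_one_of_le_general r d hr hrd
end

section
/- If r > d, then for all i,j ∈ ℕ the extinction probability satisfies the upper bound p_{i,j} ≤ (d/r)^i + (d/r)^j − (d/r)^{i+j}; in particular, for all i,j ≥ 1 one has p_{i,j} < 1, i.e., the survival probability is strictly positive. -/
/-!
With `q = d / r`, the function `F(i, j) = q^i + q^j - q^(i+j) = 1 - (1 - q^i)(1 - q^j)` equals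
`1` on the absorbing axes and is superharmonic for the chain off the axes: the one-step drift
`F - 𝔼F` equals `(1 - q) d / (2 (r + d)(i + j)) · (j - i)(q^(i-1) - q^(j-1)) ≥ 0`. Induction on
the horizon `T` then bounds `ℙ_{i,j}[τ₀ ≤ T]` by `F(i, j)`, and `F(i, j) < 1` once `i, j ≥ 1`.
-/

noncomputable def transitionMean (r d : ℝ) (f : ℕ × ℕ → ℝ) (p : ℕ × ℕ) : ℝ :=
  r / (2 * (r + d)) * f (p.1 + 1, p.2)
    + r / (2 * (r + d)) * f (p.1, p.2 + 1)
    + d * p.1 / ((r + d) * ((p.1 : ℝ) + (p.2 : ℝ))) * f (p.1 - 1, p.2)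
    + d * p.2 / ((r + d) * ((p.1 : ℝ) + (p.2 : ℝ))) * f (p.1, p.2 - 1)

def extinctionBound (q : ℝ) (p : ℕ × ℕ) : ℝ :=
  q ^ p.1 + q ^ p.2 - q ^ (p.1 + p.2)

section HitProb

variable {r d : ℝ}

theorem hitProbAux_of_absorbed {p : ℕ × ℕ} (hp : p.1 = 0 ∨ p.2 = 0) (T : ℕ) :
    hitProbAux r d T p = 1 := by
  cases T <;> simp [hitProbAux, hp]

theorem hitProbAux_zero_of_ne {p : ℕ × ℕ} (h₁ : p.1 ≠ 0) (h₂ : p.2 ≠ 0) :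
    hitProbAux r d 0 p = 0 := by
  simp [hitProbAux, h₁, h₂]

theorem hitProbAux_succ_of_ne {p : ℕ × ℕ} (h₁ : p.1 ≠ 0) (h₂ : p.2 ≠ 0) (T : ℕ) :
    hitProbAux r d (T + 1) p = transitionMean r d (hitProbAux r d T) p := by
  simp [hitProbAux, transitionMean, h₁, h₂]

theorem transitionMean_mono (hr : 0 ≤ r) (hd : 0 ≤ d) {f g : ℕ × ℕ → ℝ} (hfg : f ≤ g)
    (p : ℕ × ℕ) : transitionMean r d f p ≤ transitionMean r d g p := by
  unfold transitionMean
  gcongr <;> apply hfg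

end HitProb

section ExtinctionBound

variable {q : ℝ}

theorem extinctionBound_eq (p : ℕ × ℕ) :
    extinctionBound q p = 1 - (1 - q ^ p.1) * (1 - q ^ p.2) := by
  rw [extinctionBound, pow_add]
  ring

theorem extinctionBound_of_absorbed {p : ℕ × ℕ} (hp : p.1 = 0 ∨ p.2 = 0) :
    extinctionBound q p = 1 := by
  rcases hp with hp | hp <;> simp [extinctionBound_eq, hp]

theorem extinctionBound_nonneg (hq₀ : 0 ≤ q) (hq₁ : q ≤ 1) (p : ℕ × ℕ) :
    0 ≤ extinctionBound q p := by
  rw [extinctionBound_eq, sub_nonneg]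
  exact mul_le_one₀ (by linarith [pow_nonneg hq₀ p.1])
    (sub_nonneg.2 (pow_le_one₀ hq₀ hq₁)) (by linarith [pow_nonneg hq₀ p.2])

theorem extinctionBound_lt_one (hq₀ : 0 ≤ q) (hq₁ : q < 1) {p : ℕ × ℕ} (h₁ : p.1 ≠ 0)
    (h₂ : p.2 ≠ 0) : extinctionBound q p < 1 := by
  rw [extinctionBound_eq, sub_lt_self_iff]
  exact mul_pos (sub_pos.2 (pow_lt_one₀ hq₀ hq₁ h₁)) (sub_pos.2 (pow_lt_one₀ hq₀ hq₁ h₂))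

theorem sub_mul_pow_sub_pow_nonneg (hq₀ : 0 ≤ q) (hq₁ : q ≤ 1) (i j : ℕ) :
    0 ≤ ((j : ℝ) - i) * (q ^ i - q ^ j) := by
  rcases le_total i j with h | h
  · exact mul_nonneg (sub_nonneg.2 (Nat.cast_le.2 h))
      (sub_nonneg.2 (pow_le_pow_of_le_one hq₀ hq₁ h))
  · exact mul_nonneg_of_nonpos_of_nonpos (sub_nonpos.2 (Nat.cast_le.2 h))
      (sub_nonpos.2 (pow_le_pow_of_le_one hq₀ hq₁ h))

theorem transitionMean_extinctionBound_le {r d : ℝ} (hd : 0 ≤ d) (hrd : d < r) (i j : ℕ) :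
    transitionMean r d (extinctionBound (d / r)) (i + 1, j + 1)
      ≤ extinctionBound (d / r) (i + 1, j + 1) := by
  have hr : 0 < r := hd.trans_lt hrd
  set q := d / r
  have hdq : d = q * r := (div_mul_cancel₀ d hr.ne').symm
  have hq₀ : 0 ≤ q := by positivity
  have hq₁ : q ≤ 1 := (div_le_one hr).2 hrd.le
  have drift :
      extinctionBound q (i + 1, j + 1) - transitionMean r d (extinctionBound q) (i + 1, j + 1) =
        (1 - q) * (d / (2 * (r + d) * ((i : ℝ) + j + 2)))
          * (((j : ℝ) - i) * (q ^ i - q ^ j)) := by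
    simp only [transitionMean, extinctionBound, Nat.add_sub_cancel, pow_add, pow_one]
    push_cast
    rw [hdq]
    field_simp
    ring
  have hrate : 0 ≤ d / (2 * (r + d) * ((i : ℝ) + j + 2)) := by positivity
  have := mul_nonneg (mul_nonneg (sub_nonneg.2 hq₁) hrate)
    (sub_mul_pow_sub_pow_nonneg hq₀ hq₁ i j)
  linarith

end ExtinctionBound

theorem hitProbAux_le_extinctionBound {r d : ℝ} (hd : 0 ≤ d) (hrd : d < r) (T : ℕ) :
    hitProbAux r d T ≤ extinctionBound (d / r) := by
  have hr : 0 < r := hd.trans_lt hrd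
  have hq₀ : 0 ≤ d / r := by positivity
  have hq₁ : d / r ≤ 1 := (div_le_one hr).2 hrd.le
  induction T with
  | zero =>
    rintro ⟨_ | i, _ | j⟩
    case succ.succ =>
      rw [hitProbAux_zero_of_ne (by simp) (by simp)]
      exact extinctionBound_nonneg hq₀ hq₁ _
    all_goals rw [hitProbAux_of_absorbed (by simp), extinctionBound_of_absorbed (by simp)]
  | succ T ih =>
    rintro ⟨_ | i, _ | j⟩
    case succ.succ =>
      rw [hitProbAux_succ_of_ne (by simp) (by simp)]
      exact (transitionMean_mono hr.le hd ih _).trans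
        (transitionMean_extinctionBound_le hd hrd i j)
    all_goals rw [hitProbAux_of_absorbed (by simp), extinctionBound_of_absorbed (by simp)]

/-- if `r > d`, the upper bound
`p_{i,j} ≤ (d/r)^i + (d/r)^j − (d/r)^(i+j)` holds; in particular `p_{i,j} < 1` for
`i, j ≥ 1`, i.e. the survival probability is strictly positive. -/
theorem extinctionProb_upper_bound (r d : ℝ) (hd : 0 < d) (hrd : d < r) :
    (∀ i j : ℕ,
      extinctionProb r d i j ≤ (d / r) ^ i + (d / r) ^ j - (d / r) ^ (i + j)) ∧
    (∀ i j : ℕ, 1 ≤ i → 1 ≤ j → extinctionProb r d i j < 1) := by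
  have hr : 0 < r := hd.trans hrd
  have hbound (i j : ℕ) : extinctionProb r d i j ≤ extinctionBound (d / r) (i, j) :=
    ciSup_le fun T => hitProbAux_le_extinctionBound hd.le hrd T (i, j)
  refine ⟨hbound, fun i j hi hj => (hbound i j).trans_lt ?_⟩
  exact extinctionBound_lt_one (by positivity) ((div_lt_one hr).2 hrd) (by omega) (by omega)
end
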